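/- arXiv:0711.1886 — 2 statements merged into one kernel-verified Lean document; each statement's English description precedes it below -/
import Mathlib

section
/- Let λ = 0 and let x be a solution of the system on [0,∞). Then ‖x(t)‖² ≤ ‖x(0)‖² / (1 + t‖x(0)‖²) for all t ≥ 0; in particular x(t) → 0 as t → ∞, so the origin is globally asymptotically stable at the critical parameter value λ = 0 (the stability hypothesis at criticality required by the attractor bifurcation theorem). -/
open Real Filter Topology Set

/-!
Along a solution of `ẋ = f₀(x)` the energy `V = ‖x‖²` satisfies `V' = -2 (x₁⁴ + x₂⁴) ≤ -V²`.
Hence `V` is nonincreasing, and on any interval where `V > 0` the function `1/V - t` is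
nondecreasing; this gives `1/V(t) ≥ 1/V(0) + t`, i.e. `V(t) ≤ V(0) / (1 + t V(0)) ≤ 1/t`.
-/

noncomputable def fE (l : ℝ) (x : EuclideanSpace ℝ (Fin 2)) : EuclideanSpace ℝ (Fin 2) :=
  WithLp.toLp 2 (fun i => l * x i - x i ^ 3)

theorem antitoneOn_of_hasDerivAt_nonpos {V V' : ℝ → ℝ} {D : Set ℝ}
    (hD : Convex ℝ D) (hV : ∀ t ∈ D, HasDerivAt V (V' t) t) (hV' : ∀ t ∈ D, V' t ≤ 0) :
    AntitoneOn V D :=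
  antitoneOn_of_hasDerivWithinAt_nonpos hD
    (fun t ht => (hV t ht).continuousAt.continuousWithinAt)
    (fun t ht => (hV t (interior_subset ht)).hasDerivWithinAt)
    fun t ht => hV' t (interior_subset ht)

theorem monotoneOn_inv_sub_mul_of_hasDerivAt_le {V V' : ℝ → ℝ} {c : ℝ} {D : Set ℝ}
    (hD : Convex ℝ D) (hV : ∀ t ∈ D, HasDerivAt V (V' t) t) (hpos : ∀ t ∈ D, 0 < V t)
    (hV' : ∀ t ∈ D, V' t ≤ -c * V t ^ 2) : MonotoneOn (fun t => (V t)⁻¹ - c * t) D := by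
  have hφ : ∀ t ∈ D, HasDerivAt (fun t => (V t)⁻¹ - c * t) (-V' t / V t ^ 2 - c) t :=
    fun t ht => by
      simpa only [mul_one] using
        ((hV t ht).fun_inv (hpos t ht).ne').fun_sub ((hasDerivAt_id' t).const_mul c)
  refine monotoneOn_of_hasDerivWithinAt_nonneg hD
    (fun t ht => (hφ t ht).continuousAt.continuousWithinAt)
    (fun t ht => (hφ t (interior_subset ht)).hasDerivWithinAt) fun t ht => ?_
  have ht := interior_subset ht
  rw [sub_nonneg, le_div_iff₀ (pow_pos (hpos t ht) 2)]
  linarith [hV' t ht]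

theorem le_div_one_add_mul_of_hasDerivAt_le_neg_sq {V V' : ℝ → ℝ} {c : ℝ} (hc : 0 ≤ c)
    (hV : ∀ t, 0 ≤ t → HasDerivAt V (V' t) t) (hV' : ∀ t, 0 ≤ t → V' t ≤ -c * V t ^ 2)
    (hnn : ∀ t, 0 ≤ t → 0 ≤ V t) {t : ℝ} (ht : 0 ≤ t) :
    V t ≤ V 0 / (1 + c * t * V 0) := by
  rcases (hnn t ht).eq_or_lt with hVt | hVt
  · rw [← hVt]; have := hnn 0 le_rfl; positivity
  have hanti : AntitoneOn V (Ici 0) := antitoneOn_of_hasDerivAt_nonpos (convex_Ici 0) hV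
    fun s hs => (hV' s hs).trans (by nlinarith [hnn s hs])
  have hpos : ∀ s ∈ Icc 0 t, 0 < V s := fun s hs =>
    hVt.trans_le (hanti hs.1 ht hs.2)
  have hmono := monotoneOn_inv_sub_mul_of_hasDerivAt_le (convex_Icc 0 t)
    (fun s hs => hV s hs.1) hpos (fun s hs => hV' s hs.1)
    (left_mem_Icc.2 ht) (right_mem_Icc.2 ht) ht
  have hV0 : 0 < V 0 := hpos 0 (left_mem_Icc.2 ht)
  simp only [mul_zero, sub_zero] at hmono
  calc V t = ((V t)⁻¹)⁻¹ := (inv_inv _).symm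
    _ ≤ ((V 0)⁻¹ + c * t)⁻¹ := inv_anti₀ (by positivity) (by linarith)
    _ = V 0 / (1 + c * t * V 0) := by field_simp

theorem EuclideanSpace.norm_pow_four_le_card_mul_sum_pow_four {ι : Type*} [Fintype ι]
    (v : EuclideanSpace ℝ ι) : ‖v‖ ^ 4 ≤ Fintype.card ι * ∑ i, v i ^ 4 :=
  calc ‖v‖ ^ 4 = (∑ i, v i ^ 2) ^ 2 := by rw [← EuclideanSpace.real_norm_sq_eq]; ring
    _ ≤ Finset.univ.card * ∑ i, (v i ^ 2) ^ 2 := sq_sum_le_card_mul_sum_sq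
    _ = Fintype.card ι * ∑ i, v i ^ 4 := by simp only [Finset.card_univ, ← pow_mul]

theorem inner_fE_zero (v : EuclideanSpace ℝ (Fin 2)) :
    inner ℝ v (fE 0 v) = -∑ i, v i ^ 4 := by
  simp only [fE, PiLp.inner_apply, zero_mul, zero_sub, RCLike.inner_apply, conj_trivial,
    ← Finset.sum_neg_distrib]
  exact Finset.sum_congr rfl fun _ _ => by ring

theorem hasDerivAt_norm_sq_of_hasDerivAt_fE_zero {x : ℝ → EuclideanSpace ℝ (Fin 2)} {t : ℝ}
    (hx : HasDerivAt x (fE 0 (x t)) t) :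
    HasDerivAt (fun s => ‖x s‖ ^ 2) (-2 * ∑ i, x t i ^ 4) t :=
  hx.norm_sq.congr_deriv (by rw [inner_fE_zero]; ring)

theorem tendsto_zero_of_norm_sq_le_div {E : Type*} [NormedAddCommGroup E] {f : ℝ → E}
    (hf : ∀ t, 0 ≤ t → ‖f t‖ ^ 2 ≤ ‖f 0‖ ^ 2 / (1 + t * ‖f 0‖ ^ 2)) :
    Tendsto f atTop (𝓝 0) := by
  have hinv : ∀ᶠ t in atTop, ‖f t‖ ^ 2 ≤ t⁻¹ := (eventually_gt_atTop 0).mono fun t ht => by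
    refine (hf t ht.le).trans ?_
    rw [div_le_iff₀ (by positivity), inv_mul_eq_div, le_div_iff₀ ht]
    nlinarith [sq_nonneg ‖f 0‖]
  have hsq : Tendsto (fun t => ‖f t‖ ^ 2) atTop (𝓝 0) :=
    squeeze_zero' (.of_forall fun _ => by positivity) hinv tendsto_inv_atTop_zero
  rw [tendsto_zero_iff_norm_tendsto_zero]
  simpa [Function.comp_def, sqrt_sq (norm_nonneg _)] using (continuous_sqrt.tendsto 0).comp hsq

/-- At the critical parameter value `λ = 0`, any solution of `ẋ = f₀(x)` on `[0,∞)`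
satisfies `‖x(t)‖² ≤ ‖x(0)‖² / (1 + t‖x(0)‖²)` for all `t ≥ 0`; in particular
`x(t) → 0` as `t → ∞`, so the origin is globally asymptotically stable at criticality. -/
theorem stmt_6 (x : ℝ → EuclideanSpace ℝ (Fin 2))
    (hx : ∀ t : ℝ, 0 ≤ t → HasDerivAt x (fE 0 (x t)) t) :
    (∀ t : ℝ, 0 ≤ t → ‖x t‖ ^ 2 ≤ ‖x 0‖ ^ 2 / (1 + t * ‖x 0‖ ^ 2)) ∧
    Tendsto x atTop (nhds 0) := by
  have hderiv_le : ∀ t, 0 ≤ t → -2 * ∑ i, x t i ^ 4 ≤ -1 * (‖x t‖ ^ 2) ^ 2 := fun t _ => by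
    have := EuclideanSpace.norm_pow_four_le_card_mul_sum_pow_four (x t)
    simp only [Fintype.card_fin, Nat.cast_ofNat] at this
    linarith
  have hbound : ∀ t, 0 ≤ t → ‖x t‖ ^ 2 ≤ ‖x 0‖ ^ 2 / (1 + t * ‖x 0‖ ^ 2) := fun t ht => by
    simpa only [one_mul] using le_div_one_add_mul_of_hasDerivAt_le_neg_sq zero_le_one
      (fun s hs => hasDerivAt_norm_sq_of_hasDerivAt_fE_zero (hx s hs)) hderiv_le
      (fun _ _ => by positivity) ht
  exact ⟨hbound, tendsto_zero_of_norm_sq_le_div hbound⟩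
end

section
/- Let λ > 0 and let x be a solution of the planar system on [0,∞) with x₁(0) ≠ 0 and x₂(0) ≠ 0. Then x(t) → (σ₁√λ, σ₂√λ) as t → ∞, where σᵢ = 1 if xᵢ(0) > 0 and σᵢ = −1 if xᵢ(0) < 0; that is, every orbit starting off the two coordinate axes converges to one of the four stable nodes of the bifurcated attractor, so the four nodes are the minimal attractors and their basins are the four open quadrants. -/
/-! The system decouples into two copies of the pitchfork equation `y' = λy - y³`. Read as the
linear equation `y' = (λ - y²) y`, it shows through an integrating factor that `y` keeps the
sign of `y 0`. Then `v = y⁻²` solves `v' = 2 - 2λv`, so `v → 1/λ` exponentially fast and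
`y → ±√λ`; the negative case is the positive one applied to `-y`. -/

open Real Filter Topology

/-- The model vector field `f_λ(x₁, x₂) = (λx₁ − x₁³, λx₂ − x₂³)` on `ℝ²`. -/
def fPlanar (l : ℝ) (x : ℝ × ℝ) : ℝ × ℝ :=
  (l * x.1 - x.1 ^ 3, l * x.2 - x.2 ^ 3)

open Set intervalIntegral

theorem hasDerivWithinAt_integral_Ici_of_continuousOn {a : ℝ → ℝ} (ha : ContinuousOn a (Ici 0))
    {t : ℝ} (ht : 0 ≤ t) :
    HasDerivWithinAt (fun u => ∫ s in (0 : ℝ)..u, a s) (a t) (Ici t) t := by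
  have hIoi : ContinuousOn a (Ioi t) := ha.mono fun s hs => ht.trans (le_of_lt hs)
  refine integral_hasDerivWithinAt_right (t := Ioi t) ?_
    (hIoi.stronglyMeasurableAtFilter_nhdsWithin measurableSet_Ioi t)
    ((ha t ht).mono fun s hs => ht.trans (le_of_lt hs))
  exact (ha.mono (by rw [uIcc_of_le ht]; exact Icc_subset_Ici_self)).intervalIntegrable

theorem eq_mul_exp_integral_of_hasDerivAt {a y : ℝ → ℝ} (ha : ContinuousOn a (Ici 0))
    (hy : ∀ t, 0 ≤ t → HasDerivAt y (a t * y t) t) {t : ℝ} (ht : 0 ≤ t) :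
    y t = y 0 * exp (∫ s in (0 : ℝ)..t, a s) := by
  set φ : ℝ → ℝ := fun u => ∫ s in (0 : ℝ)..u, a s
  have hφ_cont : ContinuousOn φ (Icc 0 t) := by
    rw [← uIcc_of_le ht]
    exact continuousOn_primitive_interval'
      (ha.mono (by rw [uIcc_of_le ht]; exact Icc_subset_Ici_self)).intervalIntegrable left_mem_uIcc
  have hy_cont : ContinuousOn y (Icc 0 t) := fun s hs => (hy s hs.1).continuousAt.continuousWithinAt
  have hconst := constant_of_has_deriv_right_zero (f := fun u => y u * exp (-φ u))
    (hy_cont.mul (hφ_cont.neg.rexp)) (fun s hs =>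
      ((hy s hs.1).hasDerivWithinAt.mul
        (hasDerivWithinAt_integral_Ici_of_continuousOn ha hs.1).neg.exp).congr_deriv (by ring))
    t (right_mem_Icc.mpr ht)
  simp only [φ, integral_same, neg_zero, exp_zero, mul_one] at hconst
  rw [← hconst, mul_assoc, ← exp_add, neg_add_cancel, exp_zero, mul_one]

theorem tendsto_div_of_hasDerivAt_sub_mul {v : ℝ → ℝ} {a b : ℝ} (ha : 0 < a)
    (hv : ∀ t, 0 ≤ t → HasDerivAt v (b - a * v t) t) :
    Tendsto v atTop (𝓝 (b / a)) := by
  have hw : ∀ t, 0 ≤ t → HasDerivAt (fun s => v s - b / a) (-a * (v t - b / a)) t := fun t ht =>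
    ((hv t ht).sub_const (b / a)).congr_deriv (by field_simp; ring)
  have hw_eq : ∀ t, 0 ≤ t → v t - b / a = (v 0 - b / a) * exp (-a * t) := fun t ht => by
    simpa [mul_comm] using eq_mul_exp_integral_of_hasDerivAt continuousOn_const hw ht
  have hexp : Tendsto (fun t => (v 0 - b / a) * exp (-a * t) + b / a) atTop (𝓝 (b / a)) := by
    simpa using ((tendsto_exp_atBot.comp
      (tendsto_id.const_mul_atTop_of_neg (neg_neg_of_pos ha))).const_mul (v 0 - b / a)).add_const
      (b / a)
  refine hexp.congr' ?_
  filter_upwards [eventually_ge_atTop 0] with t ht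
  rw [← hw_eq t ht, sub_add_cancel]

section Pitchfork

variable {l : ℝ} {y : ℝ → ℝ}

theorem pitchfork_pos_of_pos (hy : ∀ t, 0 ≤ t → HasDerivAt y (l * y t - y t ^ 3) t)
    (h0 : 0 < y 0) {t : ℝ} (ht : 0 ≤ t) : 0 < y t := by
  have hcoef : ContinuousOn (fun s => l - y s ^ 2) (Ici 0) := fun s hs =>
    (continuousAt_const.sub ((hy s hs).continuousAt.pow 2)).continuousWithinAt
  rw [eq_mul_exp_integral_of_hasDerivAt hcoef
    (fun s hs => (hy s hs).congr_deriv (by ring)) ht]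
  positivity

theorem pitchfork_tendsto_sqrt_of_pos (hl : 0 < l)
    (hy : ∀ t, 0 ≤ t → HasDerivAt y (l * y t - y t ^ 3) t) (h0 : 0 < y 0) :
    Tendsto y atTop (𝓝 √l) := by
  have hv : ∀ t, 0 ≤ t → HasDerivAt (fun s => (y s ^ 2)⁻¹) (2 - 2 * l * (y t ^ 2)⁻¹) t :=
    fun t ht => by
      have hyt : y t ≠ 0 := (pitchfork_pos_of_pos hy h0 ht).ne'
      exact (((hy t ht).fun_pow 2).inv (pow_ne_zero 2 hyt)).congr_deriv (by field_simp; ring)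
  have hsq : Tendsto (fun t => ((y t ^ 2)⁻¹)⁻¹) atTop (𝓝 l) := by
    have := (tendsto_div_of_hasDerivAt_sub_mul (by positivity) hv).inv₀ (by positivity)
    rwa [div_mul_cancel_left₀ two_ne_zero, inv_inv] at this
  refine hsq.sqrt.congr' ?_
  filter_upwards [eventually_ge_atTop 0] with t ht
  rw [inv_inv, sqrt_sq (pitchfork_pos_of_pos hy h0 ht).le]

theorem pitchfork_tendsto (hl : 0 < l) (hy : ∀ t, 0 ≤ t → HasDerivAt y (l * y t - y t ^ 3) t)
    (h0 : y 0 ≠ 0) : Tendsto y atTop (𝓝 (if 0 < y 0 then √l else -√l)) := by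
  rcases h0.lt_or_gt with hneg | hpos
  · rw [if_neg hneg.not_gt]
    simpa using (pitchfork_tendsto_sqrt_of_pos hl (y := fun t => -y t)
      (fun t ht => (hy t ht).neg.congr_deriv (by ring)) (neg_pos.2 hneg)).neg
  · rw [if_pos hpos]
    exact pitchfork_tendsto_sqrt_of_pos hl hy hpos

end Pitchfork

/-- For `λ > 0`, every solution of the planar system on `[0,∞)` starting off the two
coordinate axes converges to the stable node `(σ₁√λ, σ₂√λ)`, where `σᵢ = 1` if
`xᵢ(0) > 0` and `σᵢ = −1` if `xᵢ(0) < 0`: the basins of the four nodes are the four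
open quadrants. -/
theorem stmt_13 (l : ℝ) (hl : 0 < l) (x : ℝ → ℝ × ℝ)
    (hx : ∀ t : ℝ, 0 ≤ t → HasDerivAt x (fPlanar l (x t)) t)
    (h1 : (x 0).1 ≠ 0) (h2 : (x 0).2 ≠ 0) :
    Tendsto x atTop
      (nhds ((if 0 < (x 0).1 then Real.sqrt l else -Real.sqrt l),
             (if 0 < (x 0).2 then Real.sqrt l else -Real.sqrt l))) := by
  have hx₁ : ∀ t, 0 ≤ t → HasDerivAt (fun s => (x s).1) (l * (x t).1 - (x t).1 ^ 3) t :=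
    fun t ht => (hasFDerivAt_fst (𝕜 := ℝ) (p := x t)).comp_hasDerivAt t (hx t ht)
  have hx₂ : ∀ t, 0 ≤ t → HasDerivAt (fun s => (x s).2) (l * (x t).2 - (x t).2 ^ 3) t :=
    fun t ht => (hasFDerivAt_snd (𝕜 := ℝ) (p := x t)).comp_hasDerivAt t (hx t ht)
  exact (pitchfork_tendsto hl hx₁ h1).prodMk_nhds (pitchfork_tendsto hl hx₂ h2)
end
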